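/- arXiv:1611.00975 — 5 statements merged into one kernel-verified Lean document; each statement's English description precedes it below -/
import Mathlib

section
/- Let ℱ be a set of Boolean signatures and let f ∈ 𝒮(ℱ) have arity n ≥ 1. Then the pointwise square f², defined by f²(x) = (f(x))², belongs to W_ℱ. -/
open scoped BigOperators

/-- A Boolean signature: a function `{0,1}^n → ℂ` together with its arity `n`. -/
abbrev BSig := Σ n : ℕ, (Fin n → Bool) → ℂ

/-- A signature is non-negative if all its values are non-negative reals. -/
def SigNonneg (f : BSig) : Prop := ∀ x, 0 ≤ (f.2 x).re ∧ (f.2 x).im = 0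

/-- A matrix (with non-negative real entries) is block-rank-one if any two of its rows
are linearly dependent or orthogonal. -/
def BlockRankOne {α β R : Type*} [CommRing R] [Fintype β] (M : α → β → R) : Prop :=
  ∀ a₁ a₂ : α,
    (∃ c : R, (∀ b, M a₁ b = c * M a₂ b) ∨ (∀ b, M a₂ b = c * M a₁ b)) ∨
      (∑ b, M a₁ b * M a₂ b) = 0

/-- The signature matrix `M_[r](f)` of a signature of arity `n = r + s`:
rows indexed by `{0,1}^r`, columns by `{0,1}^s`. -/
def sigMatrix {n r s : ℕ} (h : r + s = n) (f : (Fin n → Bool) → ℂ) :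
    (Fin r → Bool) → (Fin s → Bool) → ℂ :=
  fun x y => f fun i => Fin.append x y (Fin.cast h.symm i)

/-- A non-negative signature of arity `n` is block-rank-one if `n = 1` or `M_[n-1](f)`
is block-rank-one. -/
def SigBlockRankOne (f : BSig) : Prop :=
  f.1 = 1 ∨ ∀ (r : ℕ) (h : r + 1 = f.1), BlockRankOne (sigMatrix h f.2)

/-- `𝒮(ℱ)`: the smallest set of signatures containing `ℱ` and closed under tensor
product, permutation of inputs, and contraction of the first two inputs. -/
inductive Realizable (F : Set BSig) : BSig → Prop
  | base (f : BSig) : f ∈ F → Realizable F f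
  | tensor {r s : ℕ} (f : (Fin r → Bool) → ℂ) (g : (Fin s → Bool) → ℂ) :
      Realizable F ⟨r, f⟩ → Realizable F ⟨s, g⟩ →
      Realizable F ⟨r + s, fun x =>
        f (fun i => x (Fin.castAdd s i)) * g (fun j => x (Fin.natAdd r j))⟩
  | perm {n : ℕ} (f : (Fin n → Bool) → ℂ) (π : Equiv.Perm (Fin n)) :
      Realizable F ⟨n, f⟩ → Realizable F ⟨n, fun x => f (x ∘ π)⟩
  | contract {m : ℕ} (f : (Fin (m + 2) → Bool) → ℂ) :
      Realizable F ⟨m + 2, f⟩ →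
      Realizable F ⟨m, fun x => ∑ y : Bool, f (Fin.cons y (Fin.cons y x))⟩

/-- Finite tensor products `f₁ ⊗ ⋯ ⊗ f_k` of members of `ℱ` (`k ≥ 1`). -/
inductive TensorProd (F : Set BSig) : BSig → Prop
  | base (f : BSig) : f ∈ F → TensorProd F f
  | tensor {r s : ℕ} (f : (Fin r → Bool) → ℂ) (g : (Fin s → Bool) → ℂ) :
      TensorProd F ⟨r, f⟩ → TensorProd F ⟨s, g⟩ →
      TensorProd F ⟨r + s, fun x =>
        f (fun i => x (Fin.castAdd s i)) * g (fun j => x (Fin.natAdd r j))⟩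

/-- The duplicated assignment `(x₁,x₁,x₂,x₂,…,x_n,x_n)`. -/
def dup {n : ℕ} (x : Fin n → Bool) : Fin (2 * n) → Bool :=
  fun i => x ⟨i.1 / 2, by have := i.2; omega⟩

/-- A signature `G` of arity `n` is defined by an instance of `Holant(ℱ)` if
`G(x) = (f₁⊗⋯⊗f_k)_π(x₁,x₁,…,x_n,x_n)` for some `f₁,…,f_k ∈ ℱ` of total arity `2n`
and some permutation `π` of `[2n]`. -/
def DefinedByHolant (F : Set BSig) {n : ℕ} (G : (Fin n → Bool) → ℂ) : Prop :=
  ∃ (g : (Fin (2 * n) → Bool) → ℂ) (π : Equiv.Perm (Fin (2 * n))),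
    TensorProd F ⟨2 * n, g⟩ ∧ ∀ x, G x = g fun i => dup x (π i)

/-- `W_ℱ`: all `F^[t]` where `F` is defined by an instance of `Holant(ℱ)`,
`1 ≤ t ≤ arity(F)`. -/
def InW (F : Set BSig) (f : BSig) : Prop :=
  ∃ (t s : ℕ) (G : (Fin (t + s) → Bool) → ℂ),
    DefinedByHolant F G ∧ 1 ≤ t ∧
      f = ⟨t, fun x => ∑ y : Fin s → Bool, G (Fin.append x y)⟩

/-- `ℱ` satisfies the Block-rank-one condition: every signature in `W_ℱ`
is block-rank-one. -/
def BlockRankOneCond (F : Set BSig) : Prop := ∀ f, InW F f → SigBlockRankOne f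

/-- `ℱ` is balanced: for every `f ∈ 𝒮(ℱ)` of arity `n` and every `1 ≤ r ≤ n`,
the matrix `M_[r](f)` is block-rank-one. -/
def SigSetBalanced (F : Set BSig) : Prop :=
  ∀ f, Realizable F f → ∀ (r s : ℕ) (h : r + s = f.1), 1 ≤ r →
    BlockRankOne (sigMatrix h f.2)

/-- Pure affine signatures: identically zero, or constant `λ > 0` on the solution set
of a system of `𝔽₂`-linear equations and zero elsewhere. -/
def PureAffine {n : ℕ} (f : (Fin n → Bool) → ℂ) : Prop :=
  (∀ x, f x = 0) ∨
    ∃ lam : ℝ, 0 < lam ∧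
      ∃ (k : ℕ) (A : Matrix (Fin k) (Fin n) (ZMod 2)) (b : Fin k → ZMod 2),
        ∀ x : Fin n → Bool,
          (A.mulVec (fun i => if x i then 1 else 0) = b → f x = lam) ∧
          (A.mulVec (fun i => if x i then 1 else 0) ≠ b → f x = 0)

/-- The allowed factors of a product-type signature: a unary function applied to one
coordinate, the indicator of `xᵢ = xⱼ`, or the indicator of `xᵢ ≠ xⱼ`. -/
inductive ProdAtom (n : ℕ) : ((Fin n → Bool) → ℂ) → Prop
  | unary (u : Bool → ℂ) (i : Fin n) : ProdAtom n (fun x => u (x i))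
  | eq (i j : Fin n) : ProdAtom n (fun x => if x i = x j then 1 else 0)
  | ne (i j : Fin n) : ProdAtom n (fun x => if x i = x j then 0 else 1)

/-- Product-type signatures: finite products of the allowed factors. -/
def ProductType {n : ℕ} (f : (Fin n → Bool) → ℂ) : Prop :=
  ∃ (k : ℕ) (g : Fin k → (Fin n → Bool) → ℂ),
    (∀ i, ProdAtom n (g i)) ∧ ∀ x, f x = ∏ i, g i x

/-!
Every `f ∈ 𝒮(ℱ)` is the signature of an `ℱ`-gate: `f(x) = ∑_y g(x, y, y)` for a tensor product `g`
of members of `ℱ` whose inputs read each external variable once and each internal variable twice,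
since tensor products, permutations and contractions preserve this shape. Applied to `f ⊗ f` and
evaluated at `(x, x)`, this writes `f(x)² = ∑_y g(x, x, y, y)` with every variable read exactly
twice, i.e. as the sum over the internal variables of a signature defined by `Holant(ℱ)`.
-/

/-- `f` is the signature of an `ℱ`-gate: the inputs of the tensor product `g` are matched by `e`
with the external variables and with the two ends of the internal edges `ι`. -/
def IsGate (F : Set BSig) {n : ℕ} (f : (Fin n → Bool) → ℂ) : Prop :=
  ∃ (ι : Type) (_ : Fintype ι) (_ : DecidableEq ι) (N : ℕ) (g : (Fin N → Bool) → ℂ)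
    (e : Fin N ≃ Fin n ⊕ ι × Bool), TensorProd F ⟨N, g⟩ ∧
      ∀ x, f x = ∑ y : ι → Bool, g fun i => Sum.elim x (fun p => y p.1) (e i)

def consPairEquiv (m : ℕ) : Fin (m + 2) ≃ Fin m ⊕ Unit × Bool :=
  (finCongr (add_comm m 2)).trans <| finSumFinEquiv.symm.trans <| (Equiv.sumComm _ _).trans <|
    Equiv.sumCongr (Equiv.refl _) (finTwoEquiv.trans (Equiv.punitProd Bool).symm)

theorem cons_cons_eq_sumElim_consPairEquiv {m : ℕ} (b : Bool) (x : Fin m → Bool)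
    (k : Fin (m + 2)) :
    (Fin.cons b (Fin.cons b x) : Fin (m + 2) → Bool) k =
      Sum.elim x (fun _ => b) (consPairEquiv m k) := by
  induction k using Fin.cases with
  | zero => rfl
  | succ k =>
    induction k using Fin.cases with
    | zero => rfl
    | succ k =>
      have : finCongr (add_comm m 2) k.succ.succ = Fin.natAdd 2 k := by ext; simp; omega
      simp [consPairEquiv, this]

namespace IsGate

variable {F : Set BSig}

theorem of_mem {f : BSig} (hf : f ∈ F) : IsGate F f.2 :=
  ⟨Empty, inferInstance, inferInstance, f.1, f.2, (Equiv.sumEmpty _ _).symm, .base f hf,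
    fun x => by simp⟩

theorem comp_perm {n : ℕ} {f : (Fin n → Bool) → ℂ} (hf : IsGate F f)
    (π : Equiv.Perm (Fin n)) : IsGate F fun x => f (x ∘ π) := by
  obtain ⟨ι, _, _, N, g, e, hg, hfg⟩ := hf
  refine ⟨ι, inferInstance, inferInstance, N, g, e.trans (Equiv.sumCongr π (Equiv.refl _)), hg,
    fun x => ?_⟩
  simp only [hfg, Equiv.trans_apply]
  refine Finset.sum_congr rfl fun y _ => congrArg g (funext fun i => ?_)
  rcases e i with a | p <;> rfl

theorem tensor {r s : ℕ} {f : (Fin r → Bool) → ℂ} {f' : (Fin s → Bool) → ℂ}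
    (hf : IsGate F f) (hf' : IsGate F f') :
    IsGate F fun x => f (fun i => x (Fin.castAdd s i)) * f' (fun j => x (Fin.natAdd r j)) := by
  obtain ⟨ι, _, _, N, g, e, hg, hfg⟩ := hf
  obtain ⟨ι', _, _, N', g', e', hg', hfg'⟩ := hf'
  refine ⟨ι ⊕ ι', inferInstance, inferInstance, N + N', _,
    finSumFinEquiv.symm.trans <| (Equiv.sumCongr e e').trans <|
      (Equiv.sumSumSumComm _ _ _ _).trans <|
        Equiv.sumCongr finSumFinEquiv (Equiv.sumProdDistrib _ _ _).symm,
    .tensor g g' hg hg', fun x => ?_⟩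
  dsimp only
  rw [hfg, hfg', Finset.sum_mul_sum, ← Fintype.sum_prod_type',
    ← (Equiv.sumArrowEquivProdArrow ι ι' Bool).sum_comp]
  refine Finset.sum_congr rfl fun y _ => congr_arg₂ _ (congrArg g (funext fun i => ?_))
    (congrArg g' (funext fun i => ?_))
  · simp only [Equiv.trans_apply, finSumFinEquiv_symm_apply_castAdd]
    rcases h : e i with a | p <;> simp [h]
  · simp only [Equiv.trans_apply, finSumFinEquiv_symm_apply_natAdd]
    rcases h : e' i with a | p <;> simp [h]

theorem contract {m : ℕ} {f : (Fin (m + 2) → Bool) → ℂ} (hf : IsGate F f) :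
    IsGate F fun x => ∑ b : Bool, f (Fin.cons b (Fin.cons b x)) := by
  obtain ⟨ι, _, _, N, g, e, hg, hfg⟩ := hf
  refine ⟨Unit ⊕ ι, inferInstance, inferInstance, N, g,
    e.trans <| (Equiv.sumCongr (consPairEquiv m) (Equiv.refl _)).trans <|
      (Equiv.sumAssoc _ _ _).trans <|
        Equiv.sumCongr (Equiv.refl _) (Equiv.sumProdDistrib _ _ _).symm,
    hg, fun x => ?_⟩
  simp only [hfg]
  rw [← (Equiv.sumArrowEquivProdArrow Unit ι Bool).symm.sum_comp, Fintype.sum_prod_type,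
    ← (Equiv.funUnique Unit Bool).symm.sum_comp]
  refine Finset.sum_congr rfl fun b _ =>
    Finset.sum_congr rfl fun y _ => congrArg g (funext fun i => ?_)
  rcases h : e i with k | p
  · rcases h' : consPairEquiv m k with a | q <;> simp [h, h', cons_cons_eq_sumElim_consPairEquiv]
  · simp [h]

end IsGate

theorem Realizable.isGate {F : Set BSig} {f : BSig} (hf : Realizable F f) : IsGate F f.2 := by
  induction hf with
  | base f hf => exact .of_mem hf
  | tensor f f' _ _ ih ih' => exact ih.tensor ih'
  | perm f π _ ih => exact ih.comp_perm π
  | contract f _ ih => exact ih.contract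

theorem DefinedByHolant.of_equiv {F : Set BSig} {k N : ℕ} {g : (Fin N → Bool) → ℂ}
    (hg : TensorProd F ⟨N, g⟩) (e : Fin N ≃ Fin k × Bool) {G : (Fin k → Bool) → ℂ}
    (hG : ∀ z, G z = g fun i => z (e i).1) : DefinedByHolant F G := by
  obtain rfl : N = 2 * k := by simpa [mul_comm] using Fintype.card_congr e
  refine ⟨g, e.trans <| (Equiv.prodCongr (Equiv.refl _) finTwoEquiv.symm).trans <|
    finProdFinEquiv.trans (finCongr (mul_comm k 2)), hg, fun z => ?_⟩
  rw [hG]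
  -- `finProdFinEquiv (a, b) = b + 2 * a`, which `dup` reads through `/ 2` as `a`.
  refine congrArg g (funext fun i => congrArg z (Fin.ext ?_))
  simp
  omega

theorem InW.of_sum {F : Set BSig} {n N : ℕ} (hn : 1 ≤ n) {ι : Type} [Fintype ι]
    [DecidableEq ι] {g : (Fin N → Bool) → ℂ} (hg : TensorProd F ⟨N, g⟩)
    (e : Fin N ≃ (Fin n ⊕ ι) × Bool) {f : (Fin n → Bool) → ℂ}
    (hf : ∀ x, f x = ∑ y : ι → Bool, g fun i => Sum.elim x y (e i).1) : InW F ⟨n, f⟩ := by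
  let σ := Fintype.equivFin ι
  let φ : Fin n ⊕ ι ≃ Fin (n + Fintype.card ι) :=
    (Equiv.sumCongr (Equiv.refl _) σ).trans finSumFinEquiv
  refine ⟨n, Fintype.card ι, fun z => g fun i => z (φ (e i).1),
    .of_equiv hg (e.trans (Equiv.prodCongr φ (Equiv.refl _))) fun z => rfl, hn, ?_⟩
  congr 1
  funext x
  rw [hf, ← (σ.arrowCongr (Equiv.refl Bool)).sum_comp]
  refine Finset.sum_congr rfl fun y _ => congrArg g (funext fun i => ?_)
  rcases (e i).1 with a | j <;> simp [φ]

/-- For `f ∈ 𝒮(ℱ)` of arity `n ≥ 1`, the pointwise square `f²`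
belongs to `W_ℱ`. -/
theorem sq_of_realizable_mem_W (F : Set BSig) {n : ℕ} (hn : 1 ≤ n)
    (f : (Fin n → Bool) → ℂ) (hf : Realizable F ⟨n, f⟩) :
    InW F ⟨n, fun x => (f x) ^ 2⟩ := by
  obtain ⟨ι, _, _, N, g, e, hg, hfg⟩ := (Realizable.tensor f f hf hf).isGate
  let copies : Fin (n + n) ≃ Fin n × Bool :=
    finSumFinEquiv.symm.trans ((Equiv.boolProdEquivSum _).symm.trans (Equiv.prodComm _ _))
  refine .of_sum hn hg (e.trans <| (Equiv.sumCongr copies (Equiv.refl _)).trans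
    (Equiv.sumProdDistrib _ _ _).symm) fun x => ?_
  have hsq := hfg (Fin.append x x)
  simp only [Fin.append_left, Fin.append_right] at hsq
  rw [sq, hsq]
  refine Finset.sum_congr rfl fun y _ => congrArg g (funext fun i => ?_)
  rcases h : e i with k | p
  · induction k using Fin.addCases <;> simp [h, copies, -Fin.natAdd_eq_addNat]
  · simp [h]
end

section
/- Let ℱ be a set of non-negative Boolean signatures and let g be the ternary signature with g(x_1,x_2,x_3) = 1 if x_1 ⊕ x_2 ⊕ x_3 = 0 and g(x_1,x_2,x_3) = 0 otherwise (the symmetric signature [1,0,1,0]). If ℱ ∪ {g} is balanced, then every signature in ℱ is pure affine. -/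
open scoped BigOperators

/-- The ternary parity signature `[1,0,1,0]`: value `1` iff `x₁ ⊕ x₂ ⊕ x₃ = 0`. -/
def parity3 : BSig := ⟨3, fun x => if xor (x 0) (xor (x 1) (x 2)) = false then 1 else 0⟩

/-!
Write `f = g` with `g ≥ 0` real on the group `(𝔽₂)ⁿ`. Contracting `f ⊗ f` against one parity
gadget `[aᵢ ⊕ bᵢ ⊕ xᵢ ⊕ yᵢ = 0]` per coordinate realizes `(x, y) ↦ φ (x + y)`, where
`φ d = ∑ c, g c * g (c + d)` is the autocorrelation of `g`. If `φ d > 0`, rows `0` and `d` of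
its matrix `M_[n]` have inner product at least `φ 0 * φ d > 0`, so they are proportional, and
comparing columns `0` and `d` forces `φ d = φ 0`. Then `∑ c, (g (c + d) - g c) ^ 2 = 2 (φ 0 - φ d)`
vanishes, i.e. `d` is a period of `g`. For `a`, `b` in the support, `φ (b - a) ≥ g a * g b > 0`,
so the support is a coset of the group of periods and `g` is constant on it.
-/

/-- Realizability of a signature whose inputs are indexed by an arbitrary type `ι`, for some
numbering of the inputs. -/
def RealizableOn (F : Set BSig) {ι : Type} (h : (ι → Bool) → ℂ) : Prop :=
  ∃ (k : ℕ) (e : ι ≃ Fin k), Realizable F ⟨k, fun x => h (x ∘ e)⟩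

theorem Realizable.realizableOn {F : Set BSig} {n : ℕ} {f : (Fin n → Bool) → ℂ}
    (hf : Realizable F ⟨n, f⟩) : RealizableOn F f :=
  ⟨n, Equiv.refl _, hf⟩

def optionPairEquiv (α κ : Type) :
    (Option α ⊕ Option α) ⊕ κ ≃ Option (Option ((α ⊕ α) ⊕ κ)) where
  toFun
    | .inl (.inl none) => none
    | .inl (.inr none) => some none
    | .inl (.inl (some a)) => some (some (.inl (.inl a)))
    | .inl (.inr (some a)) => some (some (.inl (.inr a)))
    | .inr k => some (some (.inr k))
  invFun
    | none => .inl (.inl none)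
    | some none => .inl (.inr none)
    | some (some (.inl (.inl a))) => .inl (.inl (some a))
    | some (some (.inl (.inr a))) => .inl (.inr (some a))
    | some (some (.inr k)) => .inr k
  left_inv := by rintro (((_ | _) | (_ | _)) | _) <;> rfl
  right_inv := by rintro (_ | _ | ((_ | _) | _)) <;> rfl

def sumOptionProdEquiv (ι κ α : Type) : (κ ⊕ ι × α) ⊕ α ≃ κ ⊕ Option ι × α where
  toFun
    | .inl (.inl k) => .inl k
    | .inl (.inr (i, a)) => .inr (some i, a)
    | .inr a => .inr (none, a)
  invFun
    | .inl k => .inl (.inl k)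
    | .inr (none, a) => .inr a
    | .inr (some i, a) => .inl (.inr (i, a))
  left_inv := by rintro ((_ | ⟨_, _⟩) | _) <;> rfl
  right_inv := by rintro (_ | ⟨_ | _, _⟩) <;> rfl

namespace RealizableOn

variable {F : Set BSig} {ι κ α : Type}

theorem realizable {h : (ι → Bool) → ℂ} (hh : RealizableOn F h) {k : ℕ} (e : ι ≃ Fin k) :
    Realizable F ⟨k, fun x => h (x ∘ e)⟩ := by
  obtain ⟨k', e', hr⟩ := hh
  obtain rfl : k' = k := Fin.equiv_iff_eq.mp ⟨e'.symm.trans e⟩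
  convert Realizable.perm _ (e'.symm.trans e) hr using 4 with x
  ext i
  simp

theorem comp_equiv {h : (ι → Bool) → ℂ} (hh : RealizableOn F h) (σ : ι ≃ κ) :
    RealizableOn F fun v : κ → Bool => h (v ∘ σ) := by
  obtain ⟨k, e, hr⟩ := hh
  refine ⟨k, σ.symm.trans e, ?_⟩
  convert hr using 4 with x
  ext i
  simp

theorem mul {h : (ι → Bool) → ℂ} {h' : (κ → Bool) → ℂ} (hh : RealizableOn F h)
    (hh' : RealizableOn F h') :
    RealizableOn F fun v : ι ⊕ κ → Bool => h (v ∘ Sum.inl) * h' (v ∘ Sum.inr) := by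
  obtain ⟨k, e, hr⟩ := hh
  obtain ⟨k', e', hr'⟩ := hh'
  exact ⟨k + k', (Equiv.sumCongr e e').trans finSumFinEquiv, Realizable.tensor _ _ hr hr'⟩

theorem contract {h : (Option (Option ι) → Bool) → ℂ} (hh : RealizableOn F h) :
    RealizableOn F fun v : ι → Bool => ∑ y, h fun o => o.elim y fun o' => o'.elim y v := by
  obtain ⟨k, e, -⟩ := id hh
  have : Finite (Option (Option ι)) := .of_equiv _ e.symm
  have : Finite ι := .of_injective _ ((Option.some_injective _).comp (Option.some_injective ι))
  obtain ⟨m, ⟨eι⟩⟩ := Finite.exists_equiv_fin ι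
  let e₀ : Option (Option ι) ≃ Fin (m + 2) := eι.optionCongr.optionCongr.trans
    ((finSuccEquiv m).symm.optionCongr.trans (finSuccEquiv (m + 1)).symm)
  refine ⟨m, eι, ?_⟩
  convert Realizable.contract _ (hh.realizable e₀) using 4 with x y
  congr 1
  ext (_ | _ | i) <;> simp [e₀, -Equiv.optionCongr_symm]

theorem contract_block [Fintype ι] [DecidableEq ι] {h : ((ι ⊕ ι) ⊕ κ → Bool) → ℂ}
    (hh : RealizableOn F h) :
    RealizableOn F fun w : κ → Bool => ∑ z : ι → Bool, h (Sum.elim (Sum.elim z z) w) := by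
  refine Fintype.induction_empty_option (P := fun ι _ => ∀ [DecidableEq ι] (κ : Type)
    (h : ((ι ⊕ ι) ⊕ κ → Bool) → ℂ), RealizableOn F h →
      RealizableOn F fun w : κ → Bool => ∑ z : ι → Bool, h (Sum.elim (Sum.elim z z) w))
    ?_ ?_ ?_ ι κ h hh
  · intro α β _ e ih _ κ h hh
    let _ : Fintype α := Fintype.ofEquiv β e.symm
    classical
    convert ih κ _ (hh.comp_equiv ((Equiv.sumCongr e.symm e.symm).sumCongr (Equiv.refl κ)))
      using 2 with w
    refine Fintype.sum_equiv (e.arrowCongr (Equiv.refl Bool)).symm _ _ fun z => ?_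
    congr 1
    ext ((b | b) | k) <;> simp
  · intro _ κ h hh
    convert hh.comp_equiv ((Equiv.sumCongr (Equiv.sumEmpty _ _) (Equiv.refl κ)).trans
      (Equiv.emptySum _ _)) using 2 with w
    rw [Fintype.sum_unique]
    congr 1
    ext ((e | e) | k)
    · exact e.elim
    · exact e.elim
    · rfl
  · intro α _ ih _ κ h hh
    classical
    convert ih κ _ ((hh.comp_equiv (optionPairEquiv α κ)).contract) using 2 with w
    rw [← Equiv.piOptionEquivProd.symm.sum_comp, Fintype.sum_prod_type, Finset.sum_comm]
    refine Finset.sum_congr rfl fun z _ => Finset.sum_congr rfl fun y _ => ?_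
    congr 1
    ext (((_ | a) | (_ | a)) | k) <;> rfl

theorem mul_prod [Fintype ι] {h : (κ → Bool) → ℂ} {p : (α → Bool) → ℂ}
    (hh : RealizableOn F h) (hp : RealizableOn F p) :
    RealizableOn F fun v : κ ⊕ ι × α → Bool =>
      h (v ∘ Sum.inl) * ∏ i, p fun a => v (.inr (i, a)) := by
  refine Fintype.induction_empty_option (P := fun ι _ => RealizableOn F
    fun v : κ ⊕ ι × α → Bool => h (v ∘ Sum.inl) * ∏ i, p fun a => v (.inr (i, a))) ?_ ?_ ?_ ι
  · intro ι' β _ e ih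
    let _ : Fintype ι' := Fintype.ofEquiv β e.symm
    convert ih.comp_equiv ((Equiv.refl κ).sumCongr (e.prodCongr (Equiv.refl α))) using 2 with v
    congr 1
    exact (Fintype.prod_equiv e _ _ fun i => rfl).symm
  · convert hh.comp_equiv (Equiv.sumEmpty κ (PEmpty × α)).symm using 2 with v
    rw [Finset.univ_eq_empty, Finset.prod_empty, mul_one]
    rfl
  · intro ι' _ ih
    convert (ih.mul hp).comp_equiv (sumOptionProdEquiv ι' κ α) using 2 with v
    rw [Fintype.prod_option, mul_comm (p _), ← mul_assoc]
    rfl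

end RealizableOn

def autocorr {G R : Type*} [Add G] [Fintype G] [Mul R] [AddCommMonoid R] (g : G → R) (d : G) :
    R :=
  ∑ c, g c * g (c + d)

def parity4 : (Fin 4 → Bool) → ℂ := fun x =>
  if xor (x 0) (xor (x 1) (xor (x 2) (x 3))) = false then 1 else 0

theorem realizable_parity4 {F : Set BSig} (hpar : parity3 ∈ F) : Realizable F ⟨4, parity4⟩ := by
  have h3 : Realizable F ⟨3, parity3.2⟩ := .base _ hpar
  convert (((h3.tensor _ _ h3).perm _ (Equiv.swap 1 3)).contract _) using 2 with x
  funext x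
  obtain ⟨a, b, c, d, rfl⟩ : ∃ a b c d, x = ![a, b, c, d] :=
    ⟨x 0, x 1, x 2, x 3, by ext i; fin_cases i <;> rfl⟩
  rw [Fintype.sum_bool]
  cases a <;> cases b <;> cases c <;> cases d <;> simp [parity3, parity4, Equiv.swap_apply_def]

/-- Wiring of `f ⊗ f ⊗ parity4^ι`: the `i`-th gadget reads `(aᵢ, bᵢ, xᵢ, yᵢ)`, where `a`, `b`
are the inputs of the two copies of `f`. -/
def gadgetEquiv (ι : Type) : (ι ⊕ ι) ⊕ ι × Fin 4 ≃ ((ι ⊕ ι) ⊕ (ι ⊕ ι)) ⊕ (ι ⊕ ι) where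
  toFun
    | .inl z => .inl (.inl z)
    | .inr (i, 0) => .inl (.inr (.inl i))
    | .inr (i, 1) => .inl (.inr (.inr i))
    | .inr (i, 2) => .inr (.inl i)
    | .inr (i, 3) => .inr (.inr i)
  invFun
    | .inl (.inl z) => .inl z
    | .inl (.inr (.inl i)) => .inr (i, 0)
    | .inl (.inr (.inr i)) => .inr (i, 1)
    | .inr (.inl i) => .inr (i, 2)
    | .inr (.inr i) => .inr (i, 3)
  left_inv := by rintro (_ | ⟨i, t⟩) <;> [rfl; fin_cases t <;> rfl]
  right_inv := by rintro ((_ | _ | _) | _ | _) <;> rfl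

theorem RealizableOn.autocorr {F : Set BSig} {ι : Type} [Fintype ι] [DecidableEq ι]
    (hpar : parity3 ∈ F) {h : (ι → Bool) → ℂ} (hh : RealizableOn F h) :
    RealizableOn F fun w : ι ⊕ ι → Bool => autocorr h (w ∘ Sum.inl + w ∘ Sum.inr) := by
  have := (((hh.mul hh).mul_prod (ι := ι) (realizable_parity4 hpar).realizableOn).comp_equiv
    (gadgetEquiv ι)).contract_block
  convert this using 2 with w
  rw [_root_.autocorr, ← (Equiv.sumArrowEquivProdArrow ι ι Bool).symm.sum_comp,
    Fintype.sum_prod_type]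
  refine Finset.sum_congr rfl fun a _ => ?_
  have hxor : ∀ b : ι → Bool, (∀ i, xor (a i) (xor (b i) (xor (w (.inl i)) (w (.inr i)))) = false)
      ↔ b = a + (w ∘ Sum.inl + w ∘ Sum.inr) := by
    intro b
    rw [funext_iff]
    refine forall_congr' fun i => ?_
    change _ ↔ b i = xor (a i) (xor (w (.inl i)) (w (.inr i)))
    cases a i <;> cases b i <;> simp
  calc h a * h (a + (w ∘ Sum.inl + w ∘ Sum.inr))
      = ∑ b, if b = a + (w ∘ Sum.inl + w ∘ Sum.inr) then h a * h b else 0 :=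
        (Fintype.sum_ite_eq' _ fun b => h a * h b).symm
    _ = ∑ b, h a * h b *
          ∏ i, if xor (a i) (xor (b i) (xor (w (.inl i)) (w (.inr i)))) = false then 1 else 0 := by
        simp_rw [Finset.prod_boole, Finset.mem_univ, true_implies, hxor, mul_ite, mul_one, mul_zero]
    _ = _ := Finset.sum_congr rfl fun b _ => rfl

theorem eq_of_ofReal_eq_mul_of_ofReal_eq_mul {p q : ℝ} (hp : 0 ≤ p) (hq : 0 ≤ q) {c : ℂ}
    (hpq : (p : ℂ) = c * q) (hqp : (q : ℂ) = c * p) : p = q := by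
  have h : ((p * p : ℝ) : ℂ) = ((q * q : ℝ) : ℂ) := by
    push_cast
    linear_combination (p : ℂ) * hpq - (q : ℂ) * hqp
  exact (mul_self_inj hp hq).mp (Complex.ofReal_injective h)

section Autocorrelation

variable {G : Type*} [AddCommGroup G] [Fintype G] (g : G → ℝ)

theorem autocorr_neg (d : G) : autocorr g (-d) = autocorr g d :=
  Fintype.sum_equiv (Equiv.addRight (-d)) _ _ fun c => by simp [mul_comm]

variable {g}

theorem autocorr_nonneg (hg : ∀ c, 0 ≤ g c) (d : G) : 0 ≤ autocorr g d :=
  Finset.sum_nonneg fun c _ => mul_nonneg (hg c) (hg _)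

theorem mul_le_autocorr (hg : ∀ c, 0 ≤ g c) (c d : G) : g c * g (c + d) ≤ autocorr g d :=
  Finset.single_le_sum (f := fun c => g c * g (c + d)) (fun c _ => mul_nonneg (hg c) (hg _))
    (Finset.mem_univ c)

variable (g) in
theorem sum_sq_sub_eq_autocorr (d : G) :
    ∑ c, (g (c + d) - g c) ^ 2 = 2 * (autocorr g 0 - autocorr g d) := by
  have hshift : ∑ c, g (c + d) * g (c + d) = ∑ c, g c * g c :=
    Fintype.sum_equiv (Equiv.addRight d) _ _ fun c => rfl
  have hexpand : ∀ c, (g (c + d) - g c) ^ 2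
      = g (c + d) * g (c + d) + g c * g c - 2 * (g c * g (c + d)) :=
    fun c => by ring
  simp only [hexpand, Finset.sum_sub_distrib, Finset.sum_add_distrib, ← Finset.mul_sum, hshift,
    autocorr, add_zero]
  ring

theorem periodic_of_autocorr_eq {d : G} (h : autocorr g d = autocorr g 0) :
    Function.Periodic g d := by
  have hsum := sum_sq_sub_eq_autocorr g d
  rw [h, sub_self, mul_zero, Finset.sum_eq_zero_iff_of_nonneg fun c _ => sq_nonneg _] at hsum
  exact fun c => sub_eq_zero.mp (pow_eq_zero_iff two_ne_zero |>.mp (hsum c (Finset.mem_univ c)))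

theorem autocorr_eq_autocorr_zero_of_blockRankOne (hg : ∀ c, 0 ≤ g c)
    (hM : BlockRankOne fun x y : G => ((autocorr g (x + y) : ℝ) : ℂ)) {d : G}
    (h0 : 0 < autocorr g 0) (hd : 0 < autocorr g d) : autocorr g d = autocorr g 0 := by
  rcases hM 0 d with ⟨c, hc | hc⟩ | horth
  · have h₁ := hc 0
    have h₂ := hc (-d)
    simp only [zero_add, add_zero, add_neg_cancel, autocorr_neg] at h₁ h₂
    exact (eq_of_ofReal_eq_mul_of_ofReal_eq_mul h0.le hd.le h₁ h₂).symm
  · have h₁ := hc 0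
    have h₂ := hc (-d)
    simp only [zero_add, add_zero, add_neg_cancel, autocorr_neg] at h₁ h₂
    exact eq_of_ofReal_eq_mul_of_ofReal_eq_mul hd.le h0.le h₁ h₂
  · have hpos : 0 < ∑ y, autocorr g (0 + y) * autocorr g (d + y) :=
      Finset.sum_pos' (fun y _ => mul_nonneg (autocorr_nonneg hg _) (autocorr_nonneg hg _))
        ⟨0, Finset.mem_univ _, by simpa using mul_pos h0 hd⟩
    dsimp only at horth
    exact (hpos.ne' (by exact_mod_cast horth)).elim

theorem periodic_sub_of_blockRankOne (hg : ∀ c, 0 ≤ g c)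
    (hM : BlockRankOne fun x y : G => ((autocorr g (x + y) : ℝ) : ℂ)) {a b : G}
    (ha : g a ≠ 0) (hb : g b ≠ 0) : Function.Periodic g (b - a) := by
  have ha' := (hg a).lt_of_ne' ha
  have hb' := (hg b).lt_of_ne' hb
  refine periodic_of_autocorr_eq (autocorr_eq_autocorr_zero_of_blockRankOne hg hM ?_ ?_)
  · exact (mul_pos ha' ha').trans_le (by simpa using mul_le_autocorr hg a 0)
  · exact (mul_pos ha' hb').trans_le (by simpa using mul_le_autocorr hg a (b - a))

end Autocorrelation

section Periods

variable {G α : Type*} [AddCommGroup G]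

def periodAddSubgroup (g : G → α) : AddSubgroup G where
  carrier := {d | Function.Periodic g d}
  add_mem' := Function.Periodic.add_period
  zero_mem' := fun x => by rw [add_zero]
  neg_mem' := Function.Periodic.neg

open Classical in
theorem eq_ite_mem_periodAddSubgroup [Zero α] {g : G → α}
    (hper : ∀ a b, g a ≠ 0 → g b ≠ 0 → Function.Periodic g (b - a)) {s : G} (hs : g s ≠ 0)
    (x : G) : g x = if x - s ∈ periodAddSubgroup g then g s else 0 := by
  split_ifs with hx
  · simpa using hx s
  · by_contra hne
    exact hx (hper s x hs hne)

end Periods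

open scoped Matrix

theorem Submodule.exists_matrix_mulVec_eq_zero_iff {K : Type*} [Field K] {n : ℕ}
    (W : Submodule K (Fin n → K)) :
    ∃ (k : ℕ) (A : Matrix (Fin k) (Fin n) K), ∀ u, A *ᵥ u = 0 ↔ u ∈ W := by
  let b := Module.finBasis K ((Fin n → K) ⧸ W)
  refine ⟨_, LinearMap.toMatrix' (b.equivFun.toLinearMap ∘ₗ W.mkQ), fun u => ?_⟩
  simp [LinearMap.toMatrix'_mulVec, Submodule.Quotient.mk_eq_zero]

def boolAddEquivZMod2 : Bool ≃+ ZMod 2 where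
  toFun b := if b then 1 else 0
  invFun u := u = 1
  left_inv := by decide
  right_inv := by decide
  map_add' := by decide

theorem exists_matrix_mulVec_eq_iff_sub_mem {n : ℕ} (V : AddSubgroup (Fin n → Bool))
    (s : Fin n → Bool) : ∃ (k : ℕ) (A : Matrix (Fin k) (Fin n) (ZMod 2)) (b : Fin k → ZMod 2),
      ∀ x : Fin n → Bool, A *ᵥ (fun i => if x i then 1 else 0) = b ↔ x - s ∈ V := by
  let e : (Fin n → Bool) ≃+ (Fin n → ZMod 2) := AddEquiv.piCongrRight fun _ => boolAddEquivZMod2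
  obtain ⟨k, A, hA⟩ :=
    (AddSubgroup.toZModSubmodule 2 (V.comap e.symm.toAddMonoidHom)).exists_matrix_mulVec_eq_zero_iff
  refine ⟨k, A, A *ᵥ e s, fun x => ?_⟩
  change A *ᵥ e x = A *ᵥ e s ↔ _
  rw [← sub_eq_zero, ← Matrix.mulVec_sub, hA, AddSubgroup.mem_toZModSubmodule,
    AddSubgroup.mem_comap, ← map_sub]
  simp

theorem SigNonneg.exists_real {n : ℕ} {f : (Fin n → Bool) → ℂ} (hf : SigNonneg ⟨n, f⟩) :
    ∃ g : (Fin n → Bool) → ℝ, (∀ x, f x = g x) ∧ ∀ x, 0 ≤ g x :=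
  ⟨fun x => (f x).re, fun x => Complex.ext rfl (hf x).2, fun x => (hf x).1⟩

theorem blockRankOne_autocorr {F : Set BSig} (hpar : parity3 ∈ F) (hbal : SigSetBalanced F)
    {n : ℕ} {f : (Fin n → Bool) → ℂ} (hf : Realizable F ⟨n, f⟩) {g : (Fin n → Bool) → ℝ}
    (hfg : ∀ x, f x = g x) :
    BlockRankOne fun x y : Fin n → Bool => ((autocorr g (x + y) : ℝ) : ℂ) := by
  rcases Nat.eq_zero_or_pos n with rfl | hn
  · exact fun x y => .inl ⟨1, .inl fun _ => by rw [Subsingleton.elim x y, one_mul]⟩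
  have := hbal _ ((hf.realizableOn.autocorr hpar).realizable finSumFinEquiv) n n rfl hn
  convert this using 3 with x y
  simp only [sigMatrix, autocorr, hfg, Function.comp_def, finSumFinEquiv_apply_left,
    finSumFinEquiv_apply_right, Fin.cast_eq_self, Fin.append_left, Fin.append_right]
  push_cast
  rfl

/-- If `ℱ ∪ {[1,0,1,0]}` is balanced, then every signature in `ℱ`
is pure affine. -/
theorem balanced_with_parity_implies_affine (F : Set BSig)
    (hnn : ∀ f ∈ F, SigNonneg f) (hbal : SigSetBalanced (F ∪ {parity3})) :
    ∀ f ∈ F, PureAffine f.2 := by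
  rintro ⟨n, f⟩ hf
  show PureAffine f
  obtain ⟨g, hfg, hg⟩ := (hnn _ hf).exists_real
  by_cases hzero : ∀ x, f x = 0
  · exact .inl hzero
  obtain ⟨s, hs⟩ := not_forall.mp hzero
  have hs' : g s ≠ 0 := by simpa [hfg] using hs
  have hM := blockRankOne_autocorr (Set.mem_union_right _ (Set.mem_singleton _)) hbal
    (.base _ (.inl hf)) hfg
  have hg_eq := eq_ite_mem_periodAddSubgroup (fun _ _ => periodic_sub_of_blockRankOne hg hM) hs'
  obtain ⟨k, A, b, hA⟩ := exists_matrix_mulVec_eq_iff_sub_mem (periodAddSubgroup g) s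
  refine .inr ⟨g s, (hg s).lt_of_ne' hs', k, A, b, fun x => ⟨fun hx => ?_, fun hx => ?_⟩⟩
  · rw [hfg, hg_eq, if_pos ((hA x).mp hx)]
  · rw [hfg, hg_eq, if_neg (mt (hA x).mpr hx), Complex.ofReal_zero]
end

section
/- Let D be a finite set with |D| = d ≥ 2 and let ℱ be a set of non-negative real-valued functions of finite arities on D. If ℱ is weakly balanced, then ℱ is balanced. -/
/-!
Split the column variables as `v = (y, z)` and write `M(u, y, z) = Σ_w G(u, y, z, w)`. Balance for
the block `z`, applied with row variables `(u, y)`, makes every slice `(u, y) ↦ M(u, y, ·)`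
block-rank-one; balance for the block `y`, applied to the product instance
`G(u, y, z, w) · G(u', y, z, w')` with row variables `(u, u')` and `z, w, w'` summed out, makes the
Gram matrix `((u, u'), y) ↦ Σ_z M(u, y, z) M(u', y, z)` block-rank-one. For nonnegative entries
these two facts force any two rows of `M` with nonzero inner product to be proportional, so balance
passes from `y` and `z` to `(y, z)`. Starting from the empty block, whose matrices have a single
column, and adding one variable at a time with weak balance gives balance for every block.
-/

open scoped BigOperators

/-- A constraint function on domain `D`: a function `D^k → ℝ` with its arity `k`. -/
abbrev CSig (D : Type*) := Σ k : ℕ, (Fin k → D) → ℝ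

/-- `G : D^n → ℝ` is defined by an instance of `#CSP(ℱ)`: there are `m ≥ 1` constraint
functions `F₁,…,F_m ∈ ℱ` with scope maps `σᵢ` such that `G(x) = ∏ᵢ Fᵢ(x ∘ σᵢ)`. -/
def DefinedByCSP {D : Type*} (F : Set (CSig D)) {n : ℕ} (G : (Fin n → D) → ℝ) : Prop :=
  ∃ m : ℕ, 0 < m ∧
    ∃ (k : Fin m → ℕ) (Fs : ∀ i, (Fin (k i) → D) → ℝ) (σ : ∀ i, Fin (k i) → Fin n),
      (∀ i, (⟨k i, Fs i⟩ : CSig D) ∈ F) ∧ ∀ x, G x = ∏ i, Fs i (x ∘ σ i)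

/-- `ℱ` is weakly balanced: for every function `G : D^n → ℝ≥0` (written with
`n = a + 1 + c`, `a ≥ 1`) defined by an instance of `#CSP(ℱ)`, the `d^a × d` matrix
`M(u,v) = Σ_w G(u,v,w)` is block-rank-one. -/
def WeaklyBalancedCSP {D : Type*} [Fintype D] (F : Set (CSig D)) : Prop :=
  ∀ (a c : ℕ), 1 ≤ a → ∀ G : (Fin (a + 1 + c) → D) → ℝ, DefinedByCSP F G →
    BlockRankOne fun (u : Fin a → D) (v : D) =>
      ∑ w : Fin c → D, G (Fin.append (Fin.append u (fun _ : Fin 1 => v)) w)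

/-- `ℱ` is balanced: for every function `G : D^n → ℝ≥0` (written with `n = a + b + c`,
`a, b ≥ 1`) defined by an instance of `#CSP(ℱ)`, the `d^a × d^b` matrix
`M(u,v) = Σ_w G(u,v,w)` is block-rank-one. -/
def BalancedCSP {D : Type*} [Fintype D] (F : Set (CSig D)) : Prop :=
  ∀ (a b c : ℕ), 1 ≤ a → 1 ≤ b → ∀ G : (Fin (a + b + c) → D) → ℝ, DefinedByCSP F G →
    BlockRankOne fun (u : Fin a → D) (v : Fin b → D) =>
      ∑ w : Fin c → D, G (Fin.append (Fin.append u v) w)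

section Definability

variable {D : Type*} {F : Set (CSig D)}

/-- `DefinedByCSP` over an arbitrary variable type `ι`, with each constraint packed together with
its scope so that instances can be concatenated with `Fin.append`. -/
def DefinedByCSPOn (F : Set (CSig D)) (ι : Type*) (G : (ι → D) → ℝ) : Prop :=
  ∃ m : ℕ, 0 < m ∧ ∃ a : Fin m → Σ f : CSig D, Fin f.1 → ι,
    (∀ i, (a i).1 ∈ F) ∧ ∀ x, G x = ∏ i, (a i).1.2 (x ∘ (a i).2)

theorem definedByCSP_iff_definedByCSPOn {n : ℕ} {G : (Fin n → D) → ℝ} :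
    DefinedByCSP F G ↔ DefinedByCSPOn F (Fin n) G :=
  ⟨fun ⟨m, hm, k, Fs, σ, hF, hG⟩ => ⟨m, hm, fun i => ⟨⟨k i, Fs i⟩, σ i⟩, hF, hG⟩,
    fun ⟨m, hm, a, hF, hG⟩ =>
      ⟨m, hm, fun i => (a i).1.1, fun i => (a i).1.2, fun i => (a i).2, hF, hG⟩⟩

namespace DefinedByCSPOn

variable {ι J : Type*} {G G₁ G₂ : (ι → D) → ℝ}

theorem comp (h : DefinedByCSPOn F ι G) (ρ : ι → J) :
    DefinedByCSPOn F J fun x => G (x ∘ ρ) := by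
  obtain ⟨m, hm, a, hF, hG⟩ := h
  exact ⟨m, hm, fun i => ⟨(a i).1, ρ ∘ (a i).2⟩, hF, fun x => hG (x ∘ ρ)⟩

theorem mul (h₁ : DefinedByCSPOn F ι G₁) (h₂ : DefinedByCSPOn F ι G₂) :
    DefinedByCSPOn F ι fun x => G₁ x * G₂ x := by
  obtain ⟨m₁, hm₁, a₁, hF₁, hG₁⟩ := h₁
  obtain ⟨m₂, -, a₂, hF₂, hG₂⟩ := h₂
  refine ⟨m₁ + m₂, by omega, Fin.append a₁ a₂, fun i => ?_, fun x => ?_⟩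
  · cases i using Fin.addCases <;> simp [hF₁, hF₂]
  · show G₁ x * G₂ x = _
    rw [Fin.prod_univ_add, hG₁, hG₂]
    congr 1 <;> refine Finset.prod_congr rfl fun i _ => ?_
    · rw [Fin.append_left]
    · rw [Fin.append_right]

theorem nonneg (hnn : ∀ f ∈ F, ∀ x, 0 ≤ f.2 x) (h : DefinedByCSPOn F ι G) (x : ι → D) :
    0 ≤ G x := by
  obtain ⟨m, -, a, hF, hG⟩ := h
  rw [hG]
  exact Finset.prod_nonneg fun i _ => hnn _ (hF i) _

end DefinedByCSPOn

end Definability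

namespace BlockRankOne

variable {α α' β β' : Type*} [Fintype β] [Fintype β'] {M : α → β → ℝ}

theorem comp (h : BlockRankOne M) (e : α' → α) (f : β' ≃ β) :
    BlockRankOne fun a b => M (e a) (f b) := by
  intro a₁ a₂
  refine (h (e a₁) (e a₂)).imp
    (fun ⟨c, hc⟩ => ⟨c, hc.imp (fun h b => h (f b)) (fun h b => h (f b))⟩) fun h0 => ?_
  rw [← h0]
  exact f.sum_comp fun b => M (e a₁) b * M (e a₂) b

theorem of_subsingleton [Subsingleton β] (M : α → β → ℝ) : BlockRankOne M := by
  intro a₁ a₂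
  left
  by_cases h : ∀ b, M a₂ b = 0
  · exact ⟨0, Or.inr fun b => by rw [h b, zero_mul]⟩
  · obtain ⟨b₀, hb₀⟩ := not_forall.1 h
    refine ⟨M a₁ b₀ / M a₂ b₀, Or.inl fun b => ?_⟩
    rw [Subsingleton.elim b b₀, div_mul_cancel₀ _ hb₀]

theorem exists_pos_mul_of_sum_ne_zero (h : BlockRankOne M) (hM : ∀ a b, 0 ≤ M a b)
    {a₁ a₂ : α} (h12 : ∑ b, M a₁ b * M a₂ b ≠ 0) : ∃ c, 0 < c ∧ ∀ b, M a₂ b = c * M a₁ b := by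
  have hpos : 0 < ∑ b, M a₁ b * M a₂ b :=
    (Finset.sum_nonneg fun b _ => mul_nonneg (hM _ _) (hM _ _)).lt_of_ne' h12
  have hsq : ∀ a, 0 ≤ ∑ b, M a b * M a b := fun a => Finset.sum_nonneg fun b _ => mul_self_nonneg _
  rcases h a₁ a₂ with ⟨c, hc | hc⟩ | h0
  · have hsum : ∑ b, M a₁ b * M a₂ b = c * ∑ b, M a₂ b * M a₂ b := by
      simp only [hc, Finset.mul_sum, mul_assoc]
    have hc0 : 0 < c := pos_of_mul_pos_left (hsum ▸ hpos) (hsq a₂)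
    exact ⟨c⁻¹, inv_pos.2 hc0, fun b => by rw [hc b, inv_mul_cancel_left₀ hc0.ne']⟩
  · have hsum : ∑ b, M a₁ b * M a₂ b = c * ∑ b, M a₁ b * M a₁ b := by
      simp only [hc, Finset.mul_sum, mul_left_comm]
    exact ⟨c, pos_of_mul_pos_left (hsum ▸ hpos) (hsq a₁), hc⟩
  · exact absurd h0 h12

end BlockRankOne

theorem blockRankOne_of_slices_of_gram {X Y Z : Type*} [Fintype Y] [Fintype Z]
    (M : X → Y → Z → ℝ) (hM : ∀ x y z, 0 ≤ M x y z)
    (hslice : BlockRankOne fun (p : X × Y) z => M p.1 p.2 z)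
    (hgram : BlockRankOne fun (p : X × X) y => ∑ z, M p.1 y z * M p.2 y z) :
    BlockRankOne fun x (q : Y × Z) => M x q.1 q.2 := by
  set N : X × X → Y → ℝ := fun p y => ∑ z, M p.1 y z * M p.2 y z with hN
  have hN0 : ∀ p y, 0 ≤ N p y := fun p y =>
    Finset.sum_nonneg fun z _ => mul_nonneg (hM _ _ _) (hM _ _ _)
  have hM0 : ∀ x y, N (x, x) y = 0 → ∀ z, M x y z = 0 := fun x y h z =>
    (Finset.sum_mul_self_eq_zero_iff _ _).1 h z (Finset.mem_univ z)
  intro x₁ x₂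
  by_cases h0 : ∑ q : Y × Z, M x₁ q.1 q.2 * M x₂ q.1 q.2 = 0
  · exact Or.inr h0
  rw [Fintype.sum_prod_type] at h0
  obtain ⟨y₀, -, hy₀⟩ := Finset.exists_ne_zero_of_sum_ne_zero h0
  obtain ⟨z₀, -, hz₀⟩ := Finset.exists_ne_zero_of_sum_ne_zero hy₀
  have hdiag : ∀ x, M x y₀ z₀ ≠ 0 → N (x, x) y₀ ≠ 0 := fun x hx h => hx (hM0 x y₀ h z₀)
  have hgram_ne : ∀ p q, N p y₀ ≠ 0 → N q y₀ ≠ 0 → ∑ y, N p y * N q y ≠ 0 := fun p q hp hq h =>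
    mul_ne_zero hp hq <| (Finset.sum_eq_zero_iff_of_nonneg fun y _ =>
      mul_nonneg (hN0 p y) (hN0 q y)).1 h y₀ (Finset.mem_univ y₀)
  obtain ⟨β, hβ, h11⟩ := hgram.exists_pos_mul_of_sum_ne_zero hN0
    (hgram_ne (x₁, x₁) (x₁, x₂) (hdiag x₁ (left_ne_zero_of_mul hz₀)) hy₀)
  obtain ⟨γ, -, h22⟩ := hgram.exists_pos_mul_of_sum_ne_zero hN0
    (hgram_ne (x₁, x₂) (x₂, x₂) hy₀ (hdiag x₂ (right_ne_zero_of_mul hz₀)))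
  refine Or.inl ⟨β, Or.inr fun ⟨y, z⟩ => ?_⟩
  by_cases hy : N (x₁, x₂) y = 0
  · have h1 : M x₁ y z = 0 :=
      hM0 x₁ y ((mul_eq_zero.1 ((h11 y).symm.trans hy)).resolve_left hβ.ne') z
    have h2 : M x₂ y z = 0 := hM0 x₂ y (by rw [h22 y, hy, mul_zero]) z
    simp [h1, h2]
  · obtain ⟨c, -, hc⟩ := hslice.exists_pos_mul_of_sum_ne_zero (fun p z => hM _ _ _)
      (a₁ := (x₁, y)) (a₂ := (x₂, y)) hy
    have hNc : N (x₁, x₂) y = c * N (x₁, x₁) y := by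
      simp only [hN, hc, Finset.mul_sum, mul_left_comm]
    have hcβ : c = β :=
      mul_right_cancel₀ (right_ne_zero_of_mul (hNc ▸ hy)) (hNc.symm.trans (h11 y))
    exact hcβ ▸ hc z

def finSumFinSumFinEquiv (a b c : ℕ) : (Fin a ⊕ Fin b) ⊕ Fin c ≃ Fin (a + b + c) :=
  (Equiv.sumCongr finSumFinEquiv (Equiv.refl _)).trans finSumFinEquiv

theorem append_append_comp_finSumFinSumFinEquiv {α : Type*} {a b c : ℕ} (u : Fin a → α)
    (v : Fin b → α) (w : Fin c → α) :
    Fin.append (Fin.append u v) w ∘ finSumFinSumFinEquiv a b c = Sum.elim (Sum.elim u v) w := by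
  ext ((i | j) | k) <;> simp [finSumFinSumFinEquiv]

section Balance

variable {D : Type*} [Fintype D] {F : Set (CSig D)}

def marginal {ι κ γ : Type*} [Fintype γ] [DecidableEq γ] (G : ((ι ⊕ κ) ⊕ γ → D) → ℝ)
    (u : ι → D) (v : κ → D) : ℝ :=
  ∑ w : γ → D, G (Sum.elim (Sum.elim u v) w)

def BalancedAt (F : Set (CSig D)) (κ : Type) [Fintype κ] [DecidableEq κ] : Prop :=
  ∀ (ι γ : Type) [Fintype ι] [Nonempty ι] [Fintype γ] [DecidableEq γ]
    (G : ((ι ⊕ κ) ⊕ γ → D) → ℝ), DefinedByCSPOn F _ G → BlockRankOne (marginal G)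

theorem marginal_comp_sumMap {ι ι' κ κ' γ γ' : Type*} [Fintype γ] [DecidableEq γ]
    [Fintype γ'] [DecidableEq γ'] (eι : ι' ≃ ι) (eκ : κ' ≃ κ) (eγ : γ' ≃ γ)
    (G : ((ι' ⊕ κ') ⊕ γ' → D) → ℝ) (u : ι → D) (v : κ → D) :
    marginal (fun x => G (x ∘ Sum.map (Sum.map eι eκ) eγ)) u v = marginal G (u ∘ eι) (v ∘ eκ) := by
  simp only [marginal, Sum.elim_comp_map]
  exact (eγ.symm.arrowCongr (Equiv.refl D)).sum_comp fun w => G (Sum.elim (Sum.elim _ _) w)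

theorem blockRankOne_marginal_of_comp_sumMap {ι ι' κ κ' γ γ' : Type*} [Fintype κ]
    [DecidableEq κ] [Fintype κ'] [DecidableEq κ'] [Fintype γ] [DecidableEq γ]
    [Fintype γ'] [DecidableEq γ'] (eι : ι' ≃ ι) (eκ : κ' ≃ κ) (eγ : γ' ≃ γ)
    {G : ((ι' ⊕ κ') ⊕ γ' → D) → ℝ}
    (h : BlockRankOne (marginal fun x => G (x ∘ Sum.map (Sum.map eι eκ) eγ))) :
    BlockRankOne (marginal G) := by
  convert h.comp (· ∘ eι.symm) (eκ.arrowCongr (Equiv.refl D)) using 1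
  funext u v
  rw [marginal_comp_sumMap]
  congr 1 <;> funext k <;> simp

theorem BalancedAt.of_equiv {κ κ' : Type} [Fintype κ] [DecidableEq κ] [Fintype κ']
    [DecidableEq κ'] (h : BalancedAt F κ) (e : κ ≃ κ') : BalancedAt F κ' :=
  fun ι γ _ _ _ _ _ hG =>
    blockRankOne_marginal_of_comp_sumMap (Equiv.refl ι) e.symm (Equiv.refl γ)
      (h ι γ _ (hG.comp _))

theorem BalancedAt.of_fin {κ : Type} [Fintype κ] [DecidableEq κ]
    (h : ∀ a c : ℕ, 0 < a → ∀ G : ((Fin a ⊕ κ) ⊕ Fin c → D) → ℝ,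
      DefinedByCSPOn F _ G → BlockRankOne (marginal G)) :
    BalancedAt F κ :=
  fun ι γ _ _ _ _ _ hG =>
    blockRankOne_marginal_of_comp_sumMap (Fintype.equivFin ι) (Equiv.refl κ)
      (Fintype.equivFin γ) (h _ _ Fintype.card_pos _ (hG.comp _))

theorem balancedAt_of_isEmpty {κ : Type} [Fintype κ] [DecidableEq κ] [IsEmpty κ] :
    BalancedAt F κ :=
  fun _ _ _ _ _ _ _ _ => .of_subsingleton _

theorem WeaklyBalancedCSP.balancedAt_fin_one (hwb : WeaklyBalancedCSP F) :
    BalancedAt F (Fin 1) := by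
  refine BalancedAt.of_fin fun a c ha G hG => ?_
  have h := hwb a c ha _
    (definedByCSP_iff_definedByCSPOn.2 (hG.comp (finSumFinSumFinEquiv a 1 c)))
  simp only [append_append_comp_finSumFinSumFinEquiv] at h
  convert h.comp id (Equiv.funUnique (Fin 1) D) using 1
  funext u v
  have hv : (fun _ => v 0) = v := funext fun i => by rw [Fin.fin_one_eq_zero i]
  simp [marginal, hv]

theorem BalancedAt.balancedCSP (h : ∀ b, BalancedAt F (Fin b)) : BalancedCSP F := by
  intro a b c ha _ G hG
  have : Nonempty (Fin a) := ⟨⟨0, ha⟩⟩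
  convert h b (Fin a) (Fin c) _
    ((definedByCSP_iff_definedByCSPOn.1 hG).comp (finSumFinSumFinEquiv a b c).symm) using 1
  funext u v
  simp [marginal, ← append_append_comp_finSumFinSumFinEquiv u v, Function.comp_assoc]

section Sum

variable {ι κ κ' γ : Type} [Fintype ι] [Nonempty ι] [Fintype κ] [Fintype κ'] [DecidableEq κ']
  [Fintype γ] [DecidableEq γ] {G : ((ι ⊕ (κ ⊕ κ')) ⊕ γ → D) → ℝ}

theorem blockRankOne_marginal_slices (hκ' : BalancedAt F κ') (hG : DefinedByCSPOn F _ G) :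
    BlockRankOne fun (p : (ι → D) × (κ → D)) (z : κ' → D) => marginal G p.1 (Sum.elim p.2 z) := by
  have h := hκ' (ι ⊕ κ) γ _ (hG.comp (Sum.map (Equiv.sumAssoc ι κ κ').symm id))
  convert h.comp (fun p : (ι → D) × _ => Sum.elim p.1 p.2) (Equiv.refl _) using 1
  funext p z
  simp only [marginal]
  congr! 2 with w
  ext ((i | j | k) | l) <;> rfl

theorem blockRankOne_marginal_gram [DecidableEq κ] (hκ : BalancedAt F κ)
    (hG : DefinedByCSPOn F _ G) :
    BlockRankOne fun (p : (ι → D) × (ι → D)) (y : κ → D) =>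
      ∑ z : κ' → D, marginal G p.1 (Sum.elim y z) * marginal G p.2 (Sum.elim y z) := by
  -- two copies of `G` sharing the variables in `κ ⊕ κ'`, with disjoint row and summed variables
  let ρ₁ : (ι ⊕ (κ ⊕ κ')) ⊕ γ → ((ι ⊕ ι) ⊕ κ) ⊕ (κ' ⊕ (γ ⊕ γ)) :=
    Sum.elim (Sum.elim (.inl ∘ .inl ∘ .inl) (Sum.elim (.inl ∘ .inr) (.inr ∘ .inl)))
      (.inr ∘ .inr ∘ .inl)
  let ρ₂ : (ι ⊕ (κ ⊕ κ')) ⊕ γ → ((ι ⊕ ι) ⊕ κ) ⊕ (κ' ⊕ (γ ⊕ γ)) :=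
    Sum.elim (Sum.elim (.inl ∘ .inl ∘ .inr) (Sum.elim (.inl ∘ .inr) (.inr ∘ .inl)))
      (.inr ∘ .inr ∘ .inr)
  have h := hκ (ι ⊕ ι) (κ' ⊕ (γ ⊕ γ)) _ ((hG.comp ρ₁).mul (hG.comp ρ₂))
  convert h.comp (fun p : (ι → D) × _ => Sum.elim p.1 p.2) (Equiv.refl _) using 1
  funext p y
  simp only [marginal, Equiv.refl_apply]
  rw [← (Equiv.sumArrowEquivProdArrow _ _ D).symm.sum_comp, Fintype.sum_prod_type]
  refine Finset.sum_congr rfl fun z _ => ?_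
  rw [← (Equiv.sumArrowEquivProdArrow _ _ D).symm.sum_comp, Fintype.sum_prod_type,
    Fintype.sum_mul_sum]
  refine Finset.sum_congr rfl fun w _ => Finset.sum_congr rfl fun w' _ => ?_
  congr 2 <;> ext ((i | j | k) | l) <;> rfl

theorem BalancedAt.sum [DecidableEq κ] (hnn : ∀ f ∈ F, ∀ x, 0 ≤ f.2 x) (hκ : BalancedAt F κ)
    (hκ' : BalancedAt F κ') : BalancedAt F (κ ⊕ κ') := by
  intro ι γ _ _ _ _ G hG
  have h := blockRankOne_of_slices_of_gram (fun u y z => marginal G u (Sum.elim y z))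
    (fun _ _ _ => Finset.sum_nonneg fun _ _ => hG.nonneg hnn _)
    (blockRankOne_marginal_slices hκ' hG) (blockRankOne_marginal_gram hκ hG)
  convert h.comp id (Equiv.sumArrowEquivProdArrow κ κ' D) using 1
  funext u v
  simp [Equiv.sumArrowEquivProdArrow]

end Sum

end Balance

theorem weaklyBalanced_implies_balanced_general {D : Type*} [Fintype D]
    (F : Set (CSig D))
    (hnn : ∀ f ∈ F, ∀ x, 0 ≤ f.2 x) (hwb : WeaklyBalancedCSP F) :
    BalancedCSP F := by
  refine BalancedAt.balancedCSP fun b => ?_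
  induction b with
  | zero => exact balancedAt_of_isEmpty
  | succ b ih => exact (ih.sum hnn hwb.balancedAt_fin_one).of_equiv finSumFinEquiv

/-- Over a finite domain `D` with `|D| = d ≥ 2`, a weakly balanced
set of non-negative constraint functions is balanced. -/
theorem weaklyBalanced_implies_balanced {D : Type*} [Fintype D]
    (hd : 2 ≤ Fintype.card D) (F : Set (CSig D))
    (hnn : ∀ f ∈ F, ∀ x, 0 ≤ f.2 x) (hwb : WeaklyBalancedCSP F) :
    BalancedCSP F :=
  weaklyBalanced_implies_balanced_general F hnn hwb
end

section
/- Let n = 2m+1 be odd and let f : {0,1}^n → ℂ be a signature whose support is exactly {u, ū} for some u ∈ {0,1}^n, where ū denotes the bitwise complement of u. Then there exist an index i ∈ [n] and a partition of [n] ∖ {i} into m pairs {j, k} with u_j = u_k for each pair, such that the unary function h : {0,1} → ℂ defined by h(x) = Σ f(σ), the sum over all σ ∈ {0,1}^n with σ_i = x and σ_j = σ_k for each pair {j,k} of the partition, satisfies h(u_i) = f(u) and h(1 − u_i) = f(ū); in particular h(0)·h(1) ≠ 0. -/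
/-!
Since `2m + 1` is odd, exactly one fiber of `u` has odd size; deleting a point `i` of that
fiber leaves two fibers of even size, so the remaining coordinates split into `m` pairs on
which `u` is constant. Then `u` and `ū` both satisfy the pair constraints, so the pinned sum
only sees these two assignments, and the value pinned at `i` tells them apart.
-/

open Finset

theorem Fintype.card_subtype_subtype_ne {ι : Type*} [Fintype ι] [DecidableEq ι] (i : ι)
    (p : ι → Prop) [DecidablePred p] :
    Fintype.card {j : {j // j ≠ i} // p j} = #((univ.filter p).erase i) := by
  rw [Fintype.card_congr (Equiv.subtypeSubtypeEquivSubtypeInter (· ≠ i) p), Fintype.card_subtype]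
  congr 1; ext j; simp [and_comm]

theorem exists_even_card_fiber_subtype_ne_of_odd_card {ι : Type*} [Fintype ι] [DecidableEq ι]
    (u : ι → Bool) (hι : Odd (Fintype.card ι)) :
    ∃ i, ∀ b, Even (Fintype.card {j : {j // j ≠ i} // u j.1 = b}) := by
  have hsplit : #(univ.filter (u · = true)) + #(univ.filter (u · = false)) = Fintype.card ι := by
    simpa using card_filter_add_card_filter_not (s := univ) (fun j => u j = true)
  have hodd : ∀ b, Odd #(univ.filter (u · = b)) ↔ Even #(univ.filter (u · = !b)) := by
    rw [← hsplit, Nat.odd_add] at hι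
    rintro (_ | _) <;>
      simp only [Bool.not_false, Bool.not_true, ← Nat.not_even_iff_odd] at hι ⊢ <;> tauto
  obtain ⟨b, hb⟩ : ∃ b, Odd #(univ.filter (u · = b)) := by
    by_cases h : Odd #(univ.filter (u · = true))
    · exact ⟨true, h⟩
    · exact ⟨false, (hodd false).2 (Nat.not_odd_iff_even.1 h)⟩
  obtain ⟨i, hi⟩ := card_pos.1 hb.pos
  refine ⟨i, fun b' => ?_⟩
  rw [Fintype.card_subtype_subtype_ne i (u · = b')]
  obtain rfl | rfl := b'.eq_or_eq_not b
  · rw [card_erase_of_mem hi]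
    exact Nat.Odd.sub_odd hb odd_one
  · rw [erase_eq_of_notMem (by simp_all)]
    exact (hodd b).1 hb

theorem exists_equiv_prod_bool_of_even_card_fiber {ι κ : Type*} [Fintype ι] [Fintype κ]
    [DecidableEq κ] (u : ι → κ) {m : ℕ} (hι : Fintype.card ι = 2 * m)
    (hu : ∀ b, Even (Fintype.card {j // u j = b})) :
    ∃ E : Fin m × Bool ≃ ι, ∀ l, u (E (l, false)) = u (E (l, true)) := by
  choose k hk using hu
  have eFiber : ∀ b, {j // u j = b} ≃ Fin (k b) × Bool := fun b =>
    Fintype.equivOfCardEq (by simp [hk b]; ring)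
  let eι : ι ≃ (Σ b, Fin (k b)) × Bool :=
    (Equiv.sigmaFiberEquiv u).symm.trans <|
      (Equiv.sigmaCongrRight eFiber).trans (Equiv.sigmaProdDistrib _ _).symm
  have hcard : Fintype.card (Σ b, Fin (k b)) = m := by
    have := Fintype.card_congr eι
    rw [Fintype.card_prod, Fintype.card_bool] at this
    omega
  let eFin := Fintype.equivFinOfCardEq hcard
  let E := (eι.trans (Equiv.prodCongr eFin (Equiv.refl Bool))).symm
  have hE : ∀ l c, u (E (l, c)) = (eFin.symm l).1 := fun l c => ((eFiber _).symm _).2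
  exact ⟨E, fun l => by rw [hE, hE]⟩

theorem sum_ite_of_support_subset_pair_compl {ι M : Type*} [Fintype ι] [DecidableEq ι]
    [AddCommMonoid M] (f : (ι → Bool) → M) (u : ι → Bool)
    (hsupp : ∀ x, x ≠ u → x ≠ (fun j => !(u j)) → f x = 0)
    (C : (ι → Bool) → Prop) [DecidablePred C] (hCu : C u) (hCu' : C fun j => !(u j))
    (i : ι) (x : Bool) :
    ∑ σ, (if σ i = x ∧ C σ then f σ else 0) =
      if u i = x then f u else f fun j => !(u j) := by
  have hne : u ≠ fun j => !(u j) := fun h => by simpa using congrFun h i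
  rw [Fintype.sum_eq_add u _ hne fun σ hσ => by simp [hsupp σ hσ.1 hσ.2]]
  cases x <;> cases hui : u i <;> simp [hui, hCu, hCu']

/-- Let `n = 2m+1` be odd and let `f : {0,1}ⁿ → ℂ` have support
exactly `{u, ū}`. Then there are an index `i` and a partition of `[n] ∖ {i}` into `m`
pairs `{j,k}` with `u_j = u_k`, such that the unary function `h` obtained by summing
`f` over assignments pinned to `x` at `i` and constant on each pair satisfies
`h(u_i) = f(u)` and `h(1−u_i) = f(ū)`; in particular `h(0)·h(1) ≠ 0`. -/
theorem odd_support_pair_realizes_unary (m : ℕ)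
    (f : (Fin (2 * m + 1) → Bool) → ℂ) (u : Fin (2 * m + 1) → Bool)
    (hu : f u ≠ 0) (hub : f (fun j => !(u j)) ≠ 0)
    (hsupp : ∀ x, x ≠ u → x ≠ (fun j => !(u j)) → f x = 0) :
    ∃ (i : Fin (2 * m + 1)) (p : Fin m → Fin (2 * m + 1) × Fin (2 * m + 1)),
      (∀ l, u (p l).1 = u (p l).2) ∧
      (∀ l, (p l).1 ≠ i ∧ (p l).2 ≠ i) ∧
      Function.Injective
        (fun lb : Fin m × Bool => if lb.2 then (p lb.1).2 else (p lb.1).1) ∧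
      (∀ j, j ≠ i → ∃ lb : Fin m × Bool,
        (if lb.2 then (p lb.1).2 else (p lb.1).1) = j) ∧
      ∃ h : Bool → ℂ,
        (∀ x : Bool, h x =
          ∑ σ : Fin (2 * m + 1) → Bool,
            if σ i = x ∧ ∀ l, σ (p l).1 = σ (p l).2 then f σ else 0) ∧
        h (u i) = f u ∧ h (!(u i)) = f (fun j => !(u j)) ∧ h false * h true ≠ 0 := by
  obtain ⟨i, hi⟩ := exists_even_card_fiber_subtype_ne_of_odd_card u (by simp)
  obtain ⟨E, hE⟩ := exists_equiv_prod_bool_of_even_card_fiber (fun j : {j // j ≠ i} => u j)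
    (m := m) (by simp [Fintype.card_subtype_compl]) hi
  let p l := ((E (l, false)).1, (E (l, true)).1)
  have hp : (fun lb : Fin m × Bool => if lb.2 then (p lb.1).2 else (p lb.1).1) =
      fun lb => (E lb).1 := by
    funext ⟨l, c⟩; cases c <;> rfl
  have hpair : ∀ l, u (p l).1 = u (p l).2 := hE
  let h x := ∑ σ : Fin (2 * m + 1) → Bool,
    if σ i = x ∧ ∀ l, σ (p l).1 = σ (p l).2 then f σ else 0
  have hval : ∀ x, h x = if u i = x then f u else f fun j => !(u j) :=
    sum_ite_of_support_subset_pair_compl f u hsupp _ hpair (fun l => by simp [hpair l]) i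
  refine ⟨i, p, hpair, fun l => ⟨(E _).2, (E _).2⟩, ?_, fun j hj => ?_, h, fun _ => rfl,
    by simp [hval], by simp [hval], ?_⟩
  · rw [hp]; exact Subtype.val_injective.comp E.injective
  · exact ⟨E.symm ⟨j, hj⟩, (congrFun hp _).trans (by simp)⟩
  · cases hui : u i <;> simp [hval, hui, hu, hub]
end

section
/- Let f : {0,1}^n → ℂ be a signature whose support contains an element of even Hamming weight and an element of odd Hamming weight. Then there exist a subset S ⊆ [n] with |[n] ∖ S| odd, an assignment c ∈ {0,1}^S, and an element w ∈ {0,1}^{[n]∖S}, such that the pinned function g : {0,1}^{[n]∖S} → ℂ defined by g(y) = f(σ), where σ agrees with c on S and with y on [n] ∖ S, has support exactly {w, w̄} (w̄ the bitwise complement of w); in particular g(w) ≠ 0 and g(w̄) ≠ 0. -/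
/-!
Among all pairs `(x, y)` in the support of `f` with `x` of even and `y` of odd Hamming weight,
take one at minimal Hamming distance; that distance is odd, since it has the parity of the sum
of the two weights. Pin the coordinates on which `x` and `y` agree to their common values. The
free coordinates are exactly those where `x` and `y` differ, so on this face `x` and `y` restrict
to an antipodal pair `w, w̄`, and every other point `u` of the face lies strictly between them.
If such a `u` were in the support, it would form a closer pair with `y` (if its weight is even)
or with `x` (if odd), contradicting minimality.
-/

open scoped BigOperators

def hammingWeight {n : ℕ} (x : Fin n → Bool) : ℕ :=
  (Finset.univ.filter fun i => x i = true).card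

open Finset

theorem hammingDist_add_hammingDist_of_between {ι : Type*} [Fintype ι] {x y u : ι → Bool}
    (hu : ∀ i, x i = y i → u i = x i) :
    hammingDist x u + hammingDist u y = hammingDist x y := by
  simp only [hammingDist, card_filter, ← sum_add_distrib]
  refine sum_congr rfl fun i _ => ?_
  specialize hu i
  revert hu
  cases x i <;> cases y i <;> cases u i <;> simp

section HammingWeight

variable {n : ℕ}

theorem hammingWeight_add_hammingWeight (x y : Fin n → Bool) :
    hammingWeight x + hammingWeight y = hammingDist x y + 2 * #{i | x i && y i} := by
  simp only [hammingWeight, hammingDist, card_filter, mul_sum, ← sum_add_distrib]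
  refine sum_congr rfl fun i _ => ?_
  cases x i <;> cases y i <;> rfl

theorem odd_hammingDist_of_even_of_odd {x y : Fin n → Bool}
    (hx : Even (hammingWeight x)) (hy : Odd (hammingWeight y)) : Odd (hammingDist x y) := by
  have h := hammingWeight_add_hammingWeight x y
  rw [Nat.even_iff] at hx
  rw [Nat.odd_iff] at hy ⊢
  omega

theorem exists_parity_pair_minimizing_hammingDist {P : (Fin n → Bool) → Prop}
    (heven : ∃ x, P x ∧ Even (hammingWeight x)) (hodd : ∃ y, P y ∧ Odd (hammingWeight y)) :
    ∃ x y, P x ∧ P y ∧ Even (hammingWeight x) ∧ Odd (hammingWeight y) ∧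
      ∀ a b, P a → P b → Even (hammingWeight a) → Odd (hammingWeight b) →
        hammingDist x y ≤ hammingDist a b := by
  obtain ⟨x₀, hx₀⟩ := heven
  obtain ⟨y₀, hy₀⟩ := hodd
  obtain ⟨⟨x, y⟩, ⟨⟨hx, hxe⟩, hy, hyo⟩, hmin⟩ := Set.exists_min_image
    {p | (P p.1 ∧ Even (hammingWeight p.1)) ∧ P p.2 ∧ Odd (hammingWeight p.2)}
    (fun p => hammingDist p.1 p.2) (Set.toFinite _) ⟨(x₀, y₀), hx₀, hy₀⟩
  exact ⟨x, y, hx, hy, hxe, hyo, fun a b ha hb hae hbo => hmin (a, b) ⟨⟨ha, hae⟩, hb, hbo⟩⟩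

theorem eq_or_eq_of_between_of_minimal {P : (Fin n → Bool) → Prop} {x y u : Fin n → Bool}
    (hx : P x) (hy : P y) (hxe : Even (hammingWeight x)) (hyo : Odd (hammingWeight y))
    (hmin : ∀ a b, P a → P b → Even (hammingWeight a) → Odd (hammingWeight b) →
      hammingDist x y ≤ hammingDist a b)
    (hu : P u) (hbetween : ∀ i, x i = y i → u i = x i) : u = x ∨ u = y := by
  have hsum := hammingDist_add_hammingDist_of_between hbetween
  rcases Nat.even_or_odd (hammingWeight u) with hue | huo
  · have := hmin u y hu hy hue hyo
    exact .inl (hammingDist_eq_zero.1 (by omega : hammingDist x u = 0)).symm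
  · have := hmin x u hx hu hxe huo
    exact .inr (hammingDist_eq_zero.1 (by omega))

end HammingWeight

section Pinning

variable {ι β : Type*} [DecidableEq ι] {S : Finset ι} {c : ι → β} {z : {j // j ∉ S} → β}

def pinned (S : Finset ι) (c : ι → β) (z : {j // j ∉ S} → β) : ι → β :=
  fun j => if hj : j ∈ S then c j else z ⟨j, hj⟩

theorem pinned_apply_of_mem {j : ι} (hj : j ∈ S) : pinned S c z j = c j := by
  simp [pinned, hj]

theorem pinned_eq_iff {u : ι → β} :
    pinned S c z = u ↔ (∀ j ∈ S, c j = u j) ∧ z = fun j : {j // j ∉ S} => u j := by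
  constructor
  · rintro rfl
    exact ⟨fun j hj => (pinned_apply_of_mem hj).symm, funext fun j => by simp [pinned, j.2]⟩
  · rintro ⟨hc, rfl⟩
    funext j
    by_cases hj : j ∈ S <;> simp [pinned, hj, hc]

end Pinning

/-- If the support of `f : {0,1}ⁿ → ℂ` contains an element of even
Hamming weight and one of odd Hamming weight, then by pinning a subset `S` of the
coordinates (with `|[n]∖S|` odd) to constants one obtains a function `g` on the
remaining coordinates whose support is exactly `{w, w̄}` for some `w`. -/
theorem pin_to_antipodal_support {n : ℕ} (f : (Fin n → Bool) → ℂ)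
    (heven : ∃ x, f x ≠ 0 ∧ Even (hammingWeight x))
    (hodd : ∃ x, f x ≠ 0 ∧ Odd (hammingWeight x)) :
    ∃ (S : Finset (Fin n)) (c : Fin n → Bool) (w : {j : Fin n // j ∉ S} → Bool),
      Odd Sᶜ.card ∧
      ∃ g : ({j : Fin n // j ∉ S} → Bool) → ℂ,
        (∀ y, g y = f (fun j => if hj : j ∈ S then c j else y ⟨j, hj⟩)) ∧
        g w ≠ 0 ∧ g (fun j => !(w j)) ≠ 0 ∧
        ∀ y, y ≠ w → y ≠ (fun j => !(w j)) → g y = 0 := by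
  obtain ⟨x, y, hx, hy, hxe, hyo, hmin⟩ := exists_parity_pair_minimizing_hammingDist heven hodd
  set S : Finset (Fin n) := {i | x i = y i}
  have hflip (j : {j // j ∉ S}) : y j = !x j :=
    Bool.eq_not_iff.2 (Ne.symm (by simpa [S] using j.2))
  have hSc : Sᶜ.card = hammingDist x y := by
    simp [S, hammingDist, filter_not]
  refine ⟨S, x, fun j => x j, hSc ▸ odd_hammingDist_of_even_of_odd hxe hyo,
    fun z => f (pinned S x z), fun _ => rfl, ?_, ?_, fun z hzx hzy => ?_⟩
  · change f (pinned S x _) ≠ 0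
    rwa [pinned_eq_iff.2 ⟨fun _ _ => rfl, rfl⟩]
  · change f (pinned S x _) ≠ 0
    rwa [pinned_eq_iff.2 ⟨fun j hj => (mem_filter.1 hj).2, funext fun j => (hflip j).symm⟩]
  · by_contra hz
    rcases eq_or_eq_of_between_of_minimal hx hy hxe hyo hmin hz
      (fun i hi => pinned_apply_of_mem (by simpa [S] using hi)) with h | h
    · exact hzx (pinned_eq_iff.1 h).2
    · exact hzy ((pinned_eq_iff.1 h).2.trans (funext hflip))
end
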